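/- arXiv:2105.10725 — 6 statements merged into one kernel-verified Lean document; each statement's English description precedes it below -/
import Mathlib

section
/- For every integer n ≥ 1, the set Γ := {λ ∈ ℝⁿ : Σ_{i=1}^n arccot(λᵢ) < π} is a convex subset of ℝⁿ. -/
open Real

/-- `arccot x = π/2 - arctan x`, a strictly decreasing bijection from `ℝ` onto `(0, π)`. -/
noncomputable def arccot (x : ℝ) : ℝ := π / 2 - Real.arctan x

lemma arccot_pos (x : ℝ) : 0 < arccot x := by
  have := Real.arctan_lt_pi_div_two x
  unfold arccot; linarith

lemma arccot_lt_pi (x : ℝ) : arccot x < π := by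
  have := Real.neg_pi_div_two_lt_arctan x
  unfold arccot; linarith

lemma arccot_lt_arccot_iff {a b : ℝ} : arccot a < arccot b ↔ b < a := by
  unfold arccot
  constructor
  · intro h
    by_contra hab
    push_neg at hab
    have := Real.arctan_strictMono.monotone hab
    linarith
  · intro h
    have := Real.arctan_strictMono h
    linarith

lemma arccot_neg (x : ℝ) : arccot (-x) = π - arccot x := by
  unfold arccot
  rw [Real.arctan_neg]
  ring

/-- Subtraction formula for `arccot`. -/
lemma arccot_sub {a b : ℝ} (hab : a < b) :
    arccot a - arccot b = arccot ((1 + a * b) / (b - a)) := by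
  have hu := Real.arctan_lt_pi_div_two a
  have hv := Real.arctan_lt_pi_div_two b
  have hu' := Real.neg_pi_div_two_lt_arctan a
  have hv' := Real.neg_pi_div_two_lt_arctan b
  have hlt : Real.arctan a < Real.arctan b := Real.arctan_strictMono hab
  set x : ℝ := π / 2 - (Real.arctan b - Real.arctan a) with hx
  have hx1 : -(π / 2) < x := by simp only [hx]; linarith
  have hx2 : x < π / 2 := by simp only [hx]; linarith
  have hDa : (0:ℝ) < Real.sqrt (1 + a ^ 2) := Real.sqrt_pos.2 (by positivity)
  have hDb : (0:ℝ) < Real.sqrt (1 + b ^ 2) := Real.sqrt_pos.2 (by positivity)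
  have hsin : Real.sin (Real.arctan b - Real.arctan a) =
      (b - a) / (Real.sqrt (1 + b ^ 2) * Real.sqrt (1 + a ^ 2)) := by
    rw [Real.sin_sub, Real.sin_arctan, Real.cos_arctan, Real.sin_arctan, Real.cos_arctan]
    field_simp
    try ring
  have hcos : Real.cos (Real.arctan b - Real.arctan a) =
      (1 + a * b) / (Real.sqrt (1 + b ^ 2) * Real.sqrt (1 + a ^ 2)) := by
    rw [Real.cos_sub, Real.sin_arctan, Real.cos_arctan, Real.sin_arctan, Real.cos_arctan]
    field_simp
    try ring
  have htan : Real.tan x = (1 + a * b) / (b - a) := by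
    rw [hx, Real.tan_pi_div_two_sub, Real.tan_eq_sin_div_cos, inv_div, hsin, hcos]
    rw [div_div_div_cancel_right₀]
    exact (mul_pos hDb hDa).ne'
  have : Real.arctan ((1 + a * b) / (b - a)) = x := by
    rw [← htan, Real.arctan_tan hx1 hx2]
  unfold arccot
  rw [this, hx]
  ring

/-- The auxiliary function `g` with `arccot (g λ) = π - ∑ arccot λᵢ` on `Γ`. -/
noncomputable def gfun : (n : ℕ) → (Fin (n + 1) → ℝ) → ℝ
  | 0, lam => -lam 0
  | n + 1, lam =>
      (1 + gfun n (Fin.init lam) * lam (Fin.last (n + 1))) /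
        (lam (Fin.last (n + 1)) - gfun n (Fin.init lam))

/-- Key algebraic inequality: convexity + monotonicity of `(h, l) ↦ (1 + h l)/(l - h)`. -/
lemma F_ineq {a b h' h1 h2 l1 l2 : ℝ} (ha : 0 ≤ a) (hb : 0 ≤ b) (hab : a + b = 1)
    (hd1 : h1 < l1) (hd2 : h2 < l2) (hh : h' ≤ a * h1 + b * h2) :
    (1 + h' * (a * l1 + b * l2)) / ((a * l1 + b * l2) - h') ≤
      a * ((1 + h1 * l1) / (l1 - h1)) + b * ((1 + h2 * l2) / (l2 - h2)) := by
  have hb' : b = 1 - a := by linarith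
  subst hb'
  have ha1 : a ≤ 1 := by linarith
  have hd1' : (0:ℝ) < l1 - h1 := by linarith
  have hd2' : (0:ℝ) < l2 - h2 := by linarith
  have hdl : (0:ℝ) < (a * l1 + (1 - a) * l2) - (a * h1 + (1 - a) * h2) := by
    rcases le_total (l1 - h1) (l2 - h2) with hc | hc
    · nlinarith [mul_nonneg ha (by linarith : (0:ℝ) ≤ (l2 - h2) - (l1 - h1))]
    · nlinarith [mul_nonneg (by linarith : (0:ℝ) ≤ 1 - a)
        (by linarith : (0:ℝ) ≤ (l1 - h1) - (l2 - h2))]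
  have hdl' : (0:ℝ) < (a * l1 + (1 - a) * l2) - h' := by linarith
  -- Step 1: monotonicity in the first slot
  have step1 : (1 + h' * (a * l1 + (1 - a) * l2)) / ((a * l1 + (1 - a) * l2) - h') ≤
      (1 + (a * h1 + (1 - a) * h2) * (a * l1 + (1 - a) * l2)) /
        ((a * l1 + (1 - a) * l2) - (a * h1 + (1 - a) * h2)) := by
    rw [div_le_div_iff₀ hdl' hdl]
    nlinarith [mul_nonneg (sub_nonneg.2 hh) (sq_nonneg (a * l1 + (1 - a) * l2))]
  -- Step 2: convexity along the combination
  have hXY : (0:ℝ) ≤ a * (1 - a) *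
      (((l1 - h1) - (l2 - h2)) ^ 2 + (h1 * l2 - h2 * l1) ^ 2) :=
    mul_nonneg (mul_nonneg ha (by linarith)) (by positivity)
  have poly : (1 + (a * h1 + (1 - a) * h2) * (a * l1 + (1 - a) * l2)) *
        ((l1 - h1) * (l2 - h2)) ≤
      (a * (1 + h1 * l1) * (l2 - h2) + (1 - a) * (1 + h2 * l2) * (l1 - h1)) *
        ((a * l1 + (1 - a) * l2) - (a * h1 + (1 - a) * h2)) := by
    nlinarith [hXY]
  have step2 : (1 + (a * h1 + (1 - a) * h2) * (a * l1 + (1 - a) * l2)) /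
        ((a * l1 + (1 - a) * l2) - (a * h1 + (1 - a) * h2)) ≤
      (a * (1 + h1 * l1) * (l2 - h2) + (1 - a) * (1 + h2 * l2) * (l1 - h1)) /
        ((l1 - h1) * (l2 - h2)) := by
    rw [div_le_div_iff₀ hdl (mul_pos hd1' hd2')]
    linarith [poly]
  have eqr : (a * (1 + h1 * l1) * (l2 - h2) + (1 - a) * (1 + h2 * l2) * (l1 - h1)) /
        ((l1 - h1) * (l2 - h2)) =
      a * ((1 + h1 * l1) / (l1 - h1)) + (1 - a) * ((1 + h2 * l2) / (l2 - h2)) := by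
    field_simp
    try ring
  calc (1 + h' * (a * l1 + (1 - a) * l2)) / ((a * l1 + (1 - a) * l2) - h')
      ≤ _ := step1
    _ ≤ _ := step2
    _ = _ := eqr

/-- init of a convex combination. -/
lemma init_combo (n : ℕ) (a b : ℝ) (lam mu : Fin (n + 2) → ℝ) :
    Fin.init (a • lam + b • mu) = a • Fin.init lam + b • Fin.init mu := by
  funext i
  simp [Fin.init]

lemma sum_split (n : ℕ) (lam : Fin (n + 2) → ℝ) :
    (∑ i, arccot (lam i)) =
      (∑ i, arccot (Fin.init lam i)) + arccot (lam (Fin.last (n + 1))) := by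
  rw [Fin.sum_univ_castSucc (f := fun i => arccot (lam i))]
  simp [Fin.init]

/-- The main induction. -/
lemma main_induction (n : ℕ) :
    (∀ lam : Fin (n + 1) → ℝ, (∑ i, arccot (lam i)) < π →
      arccot (gfun n lam) = π - ∑ i, arccot (lam i)) ∧
    ConvexOn ℝ {lam : Fin (n + 1) → ℝ | (∑ i, arccot (lam i)) < π} (gfun n) := by
  induction n with
  | zero =>
    constructor
    · intro lam _
      rw [Fin.sum_univ_one]
      show arccot (-lam 0) = _
      rw [arccot_neg]
    · have hset : {lam : Fin 1 → ℝ | (∑ i, arccot (lam i)) < π} = Set.univ := by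
        ext lam
        simp [Fin.sum_univ_one, arccot_lt_pi]
      rw [hset]
      constructor
      · exact convex_univ
      · intro x _ y _ a b _ _ _
        show -(a • x + b • y) 0 ≤ a * (-x 0) + b * (-y 0)
        simp only [Pi.add_apply, Pi.smul_apply, smul_eq_mul]
        exact le_of_eq (by ring)
  | succ n ih =>
    obtain ⟨ihA, ihB⟩ := ih
    -- membership characterization
    have mem_iff : ∀ lam : Fin (n + 2) → ℝ,
        (∑ i, arccot (lam i)) < π ↔
        ((∑ i, arccot (Fin.init lam i)) < π ∧
          gfun n (Fin.init lam) < lam (Fin.last (n + 1))) := by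
      intro lam
      rw [sum_split n lam]
      constructor
      · intro hs
        have h0 : 0 < arccot (lam (Fin.last (n + 1))) := arccot_pos _
        have hS' : (∑ i, arccot (Fin.init lam i)) < π := by linarith
        refine ⟨hS', ?_⟩
        rw [← arccot_lt_arccot_iff, ihA _ hS']
        linarith
      · rintro ⟨hS', hg⟩
        have := arccot_lt_arccot_iff.2 hg
        rw [ihA _ hS'] at this
        linarith
    constructor
    · -- part A
      intro lam hlam
      obtain ⟨hS', hg⟩ := (mem_iff lam).1 hlam
      show arccot ((1 + gfun n (Fin.init lam) * lam (Fin.last (n + 1))) /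
        (lam (Fin.last (n + 1)) - gfun n (Fin.init lam))) = _
      rw [← arccot_sub hg, ihA _ hS', sum_split n lam]
      ring
    · -- part B
      constructor
      · -- convexity of the set
        intro lam hlam mu hmu a b ha hb hab
        rw [Set.mem_setOf_eq, mem_iff] at hlam hmu ⊢
        obtain ⟨hlam1, hlam2⟩ := hlam
        obtain ⟨hmu1, hmu2⟩ := hmu
        rw [init_combo]
        have hmem : a • Fin.init lam + b • Fin.init mu ∈
            {lam : Fin (n + 1) → ℝ | (∑ i, arccot (lam i)) < π} :=
          ihB.1 hlam1 hmu1 ha hb hab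
        refine ⟨hmem, ?_⟩
        have hcvx := ihB.2 hlam1 hmu1 ha hb hab
        have hlast : (a • lam + b • mu) (Fin.last (n + 1)) =
            a * lam (Fin.last (n + 1)) + b * mu (Fin.last (n + 1)) := by
          simp
        rw [hlast]
        calc gfun n (a • Fin.init lam + b • Fin.init mu)
            ≤ a • gfun n (Fin.init lam) + b • gfun n (Fin.init mu) := hcvx
          _ < a * lam (Fin.last (n + 1)) + b * mu (Fin.last (n + 1)) := by
              simp only [smul_eq_mul]
              rcases lt_or_ge 0 a with ha' | ha'
              · rcases lt_or_ge 0 b with hb' | hb'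
                · have := mul_lt_mul_of_pos_left hlam2 ha'
                  have := mul_lt_mul_of_pos_left hmu2 hb'
                  linarith
                · have hb0 : b = 0 := le_antisymm hb' hb
                  have := mul_lt_mul_of_pos_left hlam2 ha'
                  rw [hb0]; simpa using this
              · have ha0 : a = 0 := le_antisymm ha' ha
                have hb1 : b = 1 := by linarith
                rw [ha0, hb1]; simpa using hmu2
      · -- convexity inequality for gfun (n+1)
        intro lam hlam mu hmu a b ha hb hab
        rw [Set.mem_setOf_eq, mem_iff] at hlam hmu
        obtain ⟨hlam1, hlam2⟩ := hlam
        obtain ⟨hmu1, hmu2⟩ := hmu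
        have hcvx := ihB.2 hlam1 hmu1 ha hb hab
        show (1 + gfun n (Fin.init (a • lam + b • mu)) *
            (a • lam + b • mu) (Fin.last (n + 1))) /
            ((a • lam + b • mu) (Fin.last (n + 1)) -
              gfun n (Fin.init (a • lam + b • mu))) ≤ _
        have hlast : (a • lam + b • mu) (Fin.last (n + 1)) =
            a * lam (Fin.last (n + 1)) + b * mu (Fin.last (n + 1)) := by
          simp
        rw [hlast, init_combo]
        have hh : gfun n (a • Fin.init lam + b • Fin.init mu) ≤
            a * gfun n (Fin.init lam) + b * gfun n (Fin.init mu) := by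
          simpa using hcvx
        exact F_ineq ha hb hab hlam2 hmu2 hh

theorem Gamma_convex (n : ℕ) (hn : 1 ≤ n) :
    Convex ℝ {lam : Fin n → ℝ | (∑ i, arccot (lam i)) < π} := by
  obtain ⟨m, rfl⟩ : ∃ m, n = m + 1 := ⟨n - 1, (Nat.succ_pred_eq_of_pos hn).symm⟩
  exact (main_induction m).2.1
end

section
/- For all integers 1 ≤ k ≤ n, the function λ ↦ cot(𝒬_{k,n}(λ)) is concave on Γ: for all λ, μ ∈ Γ and s ∈ [0,1], cot(𝒬_{k,n}(s λ + (1−s) μ)) ≥ s · cot(𝒬_{k,n}(λ)) + (1−s) · cot(𝒬_{k,n}(μ)). (Note that for λ ∈ Γ one has 𝒬_{k,n}(λ) ∈ (0, π), so the cotangent is defined.) -/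
/-!
For a fixed index set `J`, the map `λ ↦ cot (∑_{j ∈ J} arccot λⱼ)` is concave on the region
where the sum stays below `π`. Indeed, adding a term `arccot y` to a partial sum `A ∈ (0, π)` turns
`x = cot A` into `(x y - 1) / (x + y)`; the sum stays below `π` iff `x + y > 0`, and on that
half-plane this function is jointly concave and increasing in `x`, so concavity propagates by
induction on `J`. As `cot` is decreasing on `(0, π)`, `cot ∘ 𝒬_{k,n}` is the minimum over `|J| = k`
of these concave functions, hence concave.
-/

open Real

/-- `𝒬_{k,n}(λ)`: the maximum over subsets `J ⊆ {1,…,n}` with `|J| = k` of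
`∑_{j ∈ J} arccot (λ j)`. -/
noncomputable def Qfun (n k : ℕ) (lam : Fin n → ℝ) : ℝ :=
  sSup {x : ℝ | ∃ s : Finset (Fin n), s.card = k ∧ x = ∑ i ∈ s, arccot (lam i)}

lemma arccot_strictAnti : StrictAnti arccot := fun _ _ h ↦
  sub_lt_sub_left (arctan_strictMono h) _

lemma cot_eq_tan_pi_div_two_sub (x : ℝ) : cot x = tan (π / 2 - x) := by
  rw [cot_eq_cos_div_sin, tan_eq_sin_div_cos, sin_pi_div_two_sub, cos_pi_div_two_sub]

lemma cot_arccot (x : ℝ) : cot (arccot x) = x := by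
  rw [cot_eq_tan_pi_div_two_sub, arccot, sub_sub_cancel, tan_arctan]

lemma arccot_cot {A : ℝ} (h₀ : 0 < A) (hπ : A < π) : arccot (cot A) = A := by
  rw [cot_eq_tan_pi_div_two_sub, arccot, arctan_tan (by linarith) (by linarith), sub_sub_cancel]

lemma cot_le_cot {a b : ℝ} (ha : 0 < a) (hab : a ≤ b) (hb : b < π) : cot b ≤ cot a := by
  rw [← arccot_strictAnti.le_iff_ge, arccot_cot ha (by linarith), arccot_cot (by linarith) hb]
  exact hab

lemma arccot_add_arccot_lt_pi_iff (x y : ℝ) : arccot x + arccot y < π ↔ 0 < x + y := by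
  rw [← lt_sub_iff_add_lt', ← arccot_neg, arccot_strictAnti.lt_iff_gt, neg_lt_iff_pos_add,
    add_comm]

lemma convex_combo_pos {s p q : ℝ} (hs₀ : 0 ≤ s) (hs₁ : s ≤ 1) (hp : 0 < p) (hq : 0 < q) :
    0 < s * p + (1 - s) * q :=
  convex_Ioi (0 : ℝ) hp hq hs₀ (by linarith) (by ring)

noncomputable def cotAdd (x y : ℝ) : ℝ := (x * y - 1) / (x + y)

-- No side condition: for `x + y = 0` both sides are `0` by the division-by-zero convention.
lemma cot_arccot_add_arccot (x y : ℝ) : cot (arccot x + arccot y) = cotAdd x y := by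
  have hsin (z : ℝ) : sin (arccot z) = 1 / √(1 + z ^ 2) := by
    rw [arccot, sin_pi_div_two_sub, cos_arctan]
  have hcos (z : ℝ) : cos (arccot z) = z / √(1 + z ^ 2) := by
    rw [arccot, cos_pi_div_two_sub, sin_arctan]
  rw [cot_eq_cos_div_sin, cos_add, sin_add, hsin, hsin, hcos, hcos, cotAdd]
  have : 0 < √(1 + x ^ 2) := by positivity
  have : 0 < √(1 + y ^ 2) := by positivity
  field_simp
  ring

lemma cotAdd_le_cotAdd_right {x y y' : ℝ} (hyy' : y ≤ y') (hxy : 0 < x + y) :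
    cotAdd x y ≤ cotAdd x y' := by
  rw [cotAdd, cotAdd, div_le_div_iff₀ hxy (by linarith)]
  nlinarith [mul_nonneg (sub_nonneg.2 hyy') (add_nonneg (sq_nonneg x) zero_le_one)]

/-- With `u = x + y` and `v = x - y` one has `cotAdd x y = u / 4 - (v ^ 2 + 4) / (4 * u)`,
and `(v ^ 2 + 4) / u` is the perspective of a convex function, hence jointly convex on `u > 0`. -/
lemma cotAdd_concave {s x₁ y₁ x₂ y₂ : ℝ} (hs₀ : 0 ≤ s) (hs₁ : s ≤ 1)
    (h₁ : 0 < x₁ + y₁) (h₂ : 0 < x₂ + y₂) :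
    s * cotAdd x₁ y₁ + (1 - s) * cotAdd x₂ y₂ ≤
      cotAdd (s * x₁ + (1 - s) * x₂) (s * y₁ + (1 - s) * y₂) := by
  have hu : 0 < (s * x₁ + (1 - s) * x₂) + (s * y₁ + (1 - s) * y₂) := by
    linarith [convex_combo_pos hs₀ hs₁ h₁ h₂]
  rw [← sub_nonneg]
  have expand : cotAdd (s * x₁ + (1 - s) * x₂) (s * y₁ + (1 - s) * y₂) -
      (s * cotAdd x₁ y₁ + (1 - s) * cotAdd x₂ y₂) =
      s * (1 - s) * (((x₁ - y₁) * (x₂ + y₂) - (x₂ - y₂) * (x₁ + y₁)) ^ 2 +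
        4 * ((x₁ + y₁) - (x₂ + y₂)) ^ 2) /
      (4 * (x₁ + y₁) * (x₂ + y₂) * ((s * x₁ + (1 - s) * x₂) + (s * y₁ + (1 - s) * y₂))) := by
    rw [cotAdd, cotAdd, cotAdd]
    field_simp
    ring
  rw [expand]
  have : 0 ≤ 1 - s := by linarith
  positivity

lemma arccot_add_lt_pi_iff {A : ℝ} (h₀ : 0 < A) (hπ : A < π) (x : ℝ) :
    arccot x + A < π ↔ 0 < x + cot A := by
  rw [← arccot_add_arccot_lt_pi_iff, arccot_cot h₀ hπ]

lemma cot_arccot_add {A : ℝ} (h₀ : 0 < A) (hπ : A < π) (x : ℝ) :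
    cot (arccot x + A) = cotAdd x (cot A) := by
  rw [← cot_arccot_add_arccot, arccot_cot h₀ hπ]

lemma cot_sum_arccot_concave {ι : Type*} {s : ℝ} (hs₀ : 0 ≤ s) (hs₁ : s ≤ 1)
    {lam mu : ι → ℝ} {J : Finset ι} (hJ : J.Nonempty)
    (hlam : ∑ i ∈ J, arccot (lam i) < π) (hmu : ∑ i ∈ J, arccot (mu i) < π) :
    ∑ i ∈ J, arccot ((s • lam + (1 - s) • mu) i) < π ∧
      s * cot (∑ i ∈ J, arccot (lam i)) + (1 - s) * cot (∑ i ∈ J, arccot (mu i)) ≤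
        cot (∑ i ∈ J, arccot ((s • lam + (1 - s) • mu) i)) := by
  set nu := s • lam + (1 - s) • mu
  have hnu (i : ι) : nu i = s * lam i + (1 - s) * mu i := rfl
  induction hJ using Finset.Nonempty.cons_induction with
  | singleton a =>
    simp only [Finset.sum_singleton, cot_arccot, hnu] at *
    exact ⟨arccot_lt_pi _, le_rfl⟩
  | cons a J _ hJ ih =>
    rw [Finset.sum_cons] at hlam hmu ⊢
    rw [Finset.sum_cons, Finset.sum_cons]
    have hsum_pos (f : ι → ℝ) : 0 < ∑ i ∈ J, arccot (f i) :=
      Finset.sum_pos (fun i _ ↦ arccot_pos (f i)) hJ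
    have hlamJ : ∑ i ∈ J, arccot (lam i) < π := by linarith [arccot_pos (lam a)]
    have hmuJ : ∑ i ∈ J, arccot (mu i) < π := by linarith [arccot_pos (mu a)]
    obtain ⟨hnuJ, hconc⟩ := ih hlamJ hmuJ
    rw [arccot_add_lt_pi_iff (hsum_pos _) hlamJ] at hlam
    rw [arccot_add_lt_pi_iff (hsum_pos _) hmuJ] at hmu
    rw [cot_arccot_add (hsum_pos _) hlamJ, cot_arccot_add (hsum_pos _) hmuJ,
      cot_arccot_add (hsum_pos _) hnuJ, arccot_add_lt_pi_iff (hsum_pos _) hnuJ, hnu]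
    have hcomb : 0 < (s * lam a + (1 - s) * mu a) +
        (s * cot (∑ i ∈ J, arccot (lam i)) + (1 - s) * cot (∑ i ∈ J, arccot (mu i))) := by
      linarith [convex_combo_pos hs₀ hs₁ hlam hmu]
    exact ⟨by linarith, (cotAdd_concave hs₀ hs₁ hlam hmu).trans
      (cotAdd_le_cotAdd_right hconc hcomb)⟩

lemma Qfun_eq_sup' {n k : ℕ} (hkn : k ≤ n) (lam : Fin n → ℝ) :
    Qfun n k lam = (Finset.univ.powersetCard k).sup'
      (Finset.powersetCard_nonempty.2 (by simpa using hkn)) (fun J ↦ ∑ i ∈ J, arccot (lam i)) := by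
  rw [Finset.sup'_eq_csSup_image, Qfun]
  congr 1
  ext x
  simp [eq_comm]

lemma exists_card_eq_Qfun_eq_sum {n k : ℕ} (hkn : k ≤ n) (lam : Fin n → ℝ) :
    ∃ J : Finset (Fin n), J.card = k ∧ Qfun n k lam = ∑ i ∈ J, arccot (lam i) := by
  obtain ⟨J, hJ, hQ⟩ := Finset.exists_mem_eq_sup' _ (fun J ↦ ∑ i ∈ J, arccot (lam i))
  exact ⟨J, Finset.mem_powersetCard_univ.1 hJ, (Qfun_eq_sup' hkn lam).trans hQ⟩

lemma sum_arccot_le_Qfun {n k : ℕ} (hkn : k ≤ n) (lam : Fin n → ℝ) {J : Finset (Fin n)}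
    (hJ : J.card = k) : ∑ i ∈ J, arccot (lam i) ≤ Qfun n k lam := by
  rw [Qfun_eq_sup' hkn]
  exact Finset.le_sup' (fun J ↦ ∑ i ∈ J, arccot (lam i)) (Finset.mem_powersetCard_univ.2 hJ)

lemma sum_arccot_le_sum_univ {n : ℕ} (lam : Fin n → ℝ) (J : Finset (Fin n)) :
    ∑ i ∈ J, arccot (lam i) ≤ ∑ i, arccot (lam i) :=
  Finset.sum_le_univ_sum_of_nonneg fun i ↦ (arccot_pos (lam i)).le

lemma cot_Qfun_le_cot_sum {n k : ℕ} (hk : 1 ≤ k) (hkn : k ≤ n) {lam : Fin n → ℝ}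
    (hlam : ∑ i, arccot (lam i) < π) {J : Finset (Fin n)} (hJ : J.card = k) :
    cot (Qfun n k lam) ≤ cot (∑ i ∈ J, arccot (lam i)) := by
  obtain ⟨J₀, -, hQ⟩ := exists_card_eq_Qfun_eq_sum hkn lam
  have hJ_pos : 0 < ∑ i ∈ J, arccot (lam i) :=
    Finset.sum_pos (fun i _ ↦ arccot_pos (lam i)) (Finset.card_pos.1 (by omega))
  refine cot_le_cot hJ_pos (sum_arccot_le_Qfun hkn lam hJ) ?_
  exact hQ ▸ (sum_arccot_le_sum_univ lam J₀).trans_lt hlam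

theorem cot_Qfun_concave (n k : ℕ) (hk : 1 ≤ k) (hkn : k ≤ n)
    (lam mu : Fin n → ℝ)
    (hlam : (∑ i, arccot (lam i)) < π) (hmu : (∑ i, arccot (mu i)) < π)
    (s : ℝ) (hs0 : 0 ≤ s) (hs1 : s ≤ 1) :
    s * Real.cot (Qfun n k lam) + (1 - s) * Real.cot (Qfun n k mu) ≤
      Real.cot (Qfun n k (s • lam + (1 - s) • mu)) := by
  obtain ⟨J, hJk, hQ⟩ := exists_card_eq_Qfun_eq_sum hkn (s • lam + (1 - s) • mu)
  obtain ⟨-, hconc⟩ := cot_sum_arccot_concave hs0 hs1 (Finset.card_pos.1 (by omega))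
    ((sum_arccot_le_sum_univ lam J).trans_lt hlam) ((sum_arccot_le_sum_univ mu J).trans_lt hmu)
  rw [hQ]
  refine le_trans (add_le_add ?_ ?_) hconc
  · exact mul_le_mul_of_nonneg_left (cot_Qfun_le_cot_sum hk hkn hlam hJk) hs0
  · exact mul_le_mul_of_nonneg_left (cot_Qfun_le_cot_sum hk hkn hmu hJk) (by linarith)
end

section
/- Let 2 ≤ k ≤ n and let B be an n×n complex Hermitian matrix with B ∈ Γ_I. Then 𝒫_k(B) equals the maximum, over all n×(k−1) complex matrices U satisfying UᴴU = I_{k−1} and such that UᴴBU is a diagonal matrix diag(λ'₁, …, λ'_{k−1}), of Σ_{i=1}^{k−1} arccot(λ'ᵢ). That is: every such U satisfies Σ_{i=1}^{k−1} arccot(λ'ᵢ) ≤ 𝒫_k(B), and there exists such a U achieving equality. -/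
open Real Matrix

/-- `𝒫_{k,n}(λ)`: the maximum over subsets `I ⊆ {1,…,n}` with `|I| = k-1` of
`∑_{i ∈ I} arccot (λ i)`. -/
noncomputable def Pfun (n k : ℕ) (lam : Fin n → ℝ) : ℝ :=
  sSup {x : ℝ | ∃ s : Finset (Fin n), s.card = k - 1 ∧ x = ∑ i ∈ s, arccot (lam i)}

/-!
If `U` has `k - 1` orthonormal columns with `Uᴴ B U = diag d`, Poincaré interlacing says that
the `i`-th smallest `d` is at least the `i`-th smallest eigenvalue of `B`: the span of the
columns of `U` belonging to the `i + 1` smallest `d`s meets the span of the eigenvectors of the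
`n - i` largest eigenvalues, and on a common nonzero vector the Rayleigh quotient is bounded by
both. As `arccot` is decreasing, `∑ arccot dᵢ` is then at most the sum of `arccot` over the
`k - 1` smallest eigenvalues, hence at most `𝒫_k(B)`. Conversely, the eigenvectors of any
`k - 1` eigenvalues realising `𝒫_k(B)` form such a `U` with equality.
-/

lemma arccot_antitone : Antitone arccot :=
  fun _ _ h => sub_le_sub_left (arctan_strictMono.monotone h) _

section Pfun

variable {n k : ℕ} (lam : Fin n → ℝ)

lemma finite_setOf_sum_arccot :
    {x : ℝ | ∃ s : Finset (Fin n), s.card = k - 1 ∧ x = ∑ i ∈ s, arccot (lam i)}.Finite :=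
  (Set.finite_range fun s : Finset (Fin n) => ∑ i ∈ s, arccot (lam i)).subset <| by
    rintro x ⟨s, -, rfl⟩
    exact ⟨s, rfl⟩

lemma sum_arccot_le_Pfun {s : Finset (Fin n)} (hs : s.card = k - 1) :
    ∑ i ∈ s, arccot (lam i) ≤ Pfun n k lam :=
  le_csSup (finite_setOf_sum_arccot lam).bddAbove ⟨s, hs, rfl⟩

lemma exists_sum_arccot_eq_Pfun (hk : k - 1 ≤ n) :
    ∃ s : Finset (Fin n), s.card = k - 1 ∧ ∑ i ∈ s, arccot (lam i) = Pfun n k lam := by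
  obtain ⟨s, -, hs⟩ := Finset.exists_subset_card_eq (s := (Finset.univ : Finset (Fin n)))
    (n := k - 1) (by simpa using hk)
  obtain ⟨t, ht, hsum⟩ :=
    Set.Nonempty.csSup_mem (by exact ⟨_, s, hs, rfl⟩) (finite_setOf_sum_arccot (k := k) lam)
  exact ⟨t, ht, hsum.symm⟩

end Pfun

namespace Matrix

lemma exists_ne_zero_mulVec_eq_mulVec {𝕜 m ι κ : Type*} [Field 𝕜] [Fintype m] [Fintype ι]
    [Fintype κ] {U : Matrix m ι 𝕜} {V : Matrix m κ 𝕜} (hV : Function.Injective V.mulVec)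
    (hcard : Fintype.card m < Fintype.card ι + Fintype.card κ) :
    ∃ a b, a ≠ 0 ∧ U *ᵥ a = V *ᵥ b := by
  have hker : LinearMap.ker (U.mulVecLin.coprod (-V.mulVecLin)) ≠ ⊥ :=
    LinearMap.ker_ne_bot_of_finrank_lt (by simpa [Module.finrank_prod] using hcard)
  obtain ⟨⟨a, b⟩, hab, hne⟩ := Submodule.exists_mem_ne_zero_of_ne_bot hker
  have hUV : U *ᵥ a = V *ᵥ b := add_neg_eq_zero.mp (by simpa using hab)
  refine ⟨a, b, fun ha => hne ?_, hUV⟩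
  have hb : b = 0 := hV (by simpa [ha] using hUV.symm)
  simp [ha, hb]

variable {𝕜 : Type*} [RCLike 𝕜] {m ι κ : Type*} [Fintype m] [DecidableEq ι] [DecidableEq κ]

def IsDiagCompression (B : Matrix m m 𝕜) (U : Matrix m ι 𝕜) (d : ι → ℝ) : Prop :=
  Uᴴ * U = 1 ∧ Uᴴ * B * U = diagonal fun j => (d j : 𝕜)

lemma IsHermitian.isDiagCompression_eigenvectorUnitary [DecidableEq m] {B : Matrix m m 𝕜}
    (hB : B.IsHermitian) :
    IsDiagCompression B (hB.eigenvectorUnitary : Matrix m m 𝕜) hB.eigenvalues := by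
  refine ⟨Unitary.coe_star_mul_self hB.eigenvectorUnitary, ?_⟩
  have h := hB.conjStarAlgAut_star_eigenvectorUnitary
  simp only [Unitary.conjStarAlgAut_apply, Unitary.coe_star, star_star] at h
  exact h

namespace IsDiagCompression

variable {B : Matrix m m 𝕜} {U : Matrix m ι 𝕜} {d : ι → ℝ}

lemma submatrix (h : IsDiagCompression B U d) {f : κ → ι} (hf : Function.Injective f) :
    IsDiagCompression B (U.submatrix id f) (d ∘ f) := by
  constructor
  · rw [conjTranspose_submatrix, ← submatrix_mul _ _ _ _ _ Function.bijective_id, h.1,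
      submatrix_one _ hf]
  · rw [conjTranspose_submatrix, ← submatrix_id_id B,
      ← submatrix_mul _ _ _ _ _ Function.bijective_id,
      ← submatrix_mul _ _ _ _ _ Function.bijective_id, h.2]
    exact submatrix_diagonal _ _ hf

lemma one [DecidableEq m] (h : IsDiagCompression B U d) : IsDiagCompression 1 U 1 :=
  ⟨h.1, by simp [h.1]⟩

lemma star_mulVec_dotProduct_mulVec [Fintype ι] (h : IsDiagCompression B U d) (c : ι → 𝕜) :
    star (U *ᵥ c) ⬝ᵥ B *ᵥ (U *ᵥ c) = ((∑ j, d j * ‖c j‖ ^ 2 : ℝ) : 𝕜) := by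
  rw [star_mulVec, ← dotProduct_mulVec, mulVec_mulVec, mulVec_mulVec, h.2, dotProduct]
  push_cast
  refine Finset.sum_congr rfl fun j _ => ?_
  rw [mulVec_diagonal, ← RCLike.conj_mul]
  simp only [Pi.star_apply, RCLike.star_def]
  ring

lemma star_mulVec_dotProduct_mulVec_self [DecidableEq m] [Fintype ι]
    (h : IsDiagCompression B U d) (c : ι → 𝕜) :
    star (U *ᵥ c) ⬝ᵥ U *ᵥ c = ((∑ j, ‖c j‖ ^ 2 : ℝ) : 𝕜) := by
  simpa using h.one.star_mulVec_dotProduct_mulVec c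

lemma mulVec_injective [Fintype ι] (h : IsDiagCompression B U d) : Function.Injective U.mulVec :=
  fun a b hab => by simpa [mulVec_mulVec, h.1] using congrArg (Uᴴ *ᵥ ·) hab

lemma sort_le_sort {n p : ℕ} {B Q : Matrix (Fin n) (Fin n) 𝕜} {lam : Fin n → ℝ}
    {U : Matrix (Fin n) (Fin p) 𝕜} {d : Fin p → ℝ} (hQ : IsDiagCompression B Q lam)
    (hU : IsDiagCompression B U d) (hp : p ≤ n) (i : Fin p) :
    lam (Tuple.sort lam (Fin.castLE hp i)) ≤ d (Tuple.sort d i) := by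
  set σ := Tuple.sort lam
  set τ := Tuple.sort d
  let f : Fin (i + 1) → Fin p := fun j => τ (Fin.castLE i.2 j)
  let g : Fin (n - i) → Fin n := fun j => σ ⟨i + j, by omega⟩
  have hf : Function.Injective f := τ.injective.comp (Fin.castLE_injective _)
  have hg : Function.Injective g := σ.injective.comp fun j j' h => by
    simpa [Fin.ext_iff] using h
  -- The columns of `U` carrying the `i + 1` smallest `d`s and the columns of `Q` carrying the
  -- `n - i` largest `lam`s span subspaces of `𝕜ⁿ` that meet in a nonzero vector.
  have hU' := hU.submatrix hf
  have hQ' := hQ.submatrix hg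
  obtain ⟨a, b, ha, hab⟩ := exists_ne_zero_mulVec_eq_mulVec (U := U.submatrix id f)
    hQ'.mulVec_injective (by simp only [Fintype.card_fin]; omega)
  have hd : ∀ j, d (f j) ≤ d (τ i) := fun j =>
    Tuple.monotone_sort d (Fin.le_iff_val_le_val.2 (by simp only [Fin.val_castLE]; omega))
  have hlam : ∀ j, lam (σ (Fin.castLE hp i)) ≤ lam (g j) := fun j =>
    Tuple.monotone_sort lam (Fin.le_iff_val_le_val.2 (by simp))
  have hnorm : ∑ j, ‖a j‖ ^ 2 = ∑ j, ‖b j‖ ^ 2 := by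
    have h := hU'.star_mulVec_dotProduct_mulVec_self a
    rw [hab, hQ'.star_mulVec_dotProduct_mulVec_self] at h
    exact_mod_cast h.symm
  have hquad : ∑ j, d (f j) * ‖a j‖ ^ 2 = ∑ j, lam (g j) * ‖b j‖ ^ 2 := by
    have h := hU'.star_mulVec_dotProduct_mulVec a
    rw [hab, hQ'.star_mulVec_dotProduct_mulVec] at h
    exact_mod_cast h.symm
  have hpos : 0 < ∑ j, ‖a j‖ ^ 2 := by
    obtain ⟨j, hj⟩ := Function.ne_iff.mp ha
    exact Finset.sum_pos' (fun j _ => by positivity)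
      ⟨j, Finset.mem_univ j, pow_pos (norm_pos_iff.mpr hj) 2⟩
  refine le_of_mul_le_mul_right ?_ hpos
  calc lam (σ (Fin.castLE hp i)) * ∑ j, ‖a j‖ ^ 2
      = ∑ j, lam (σ (Fin.castLE hp i)) * ‖b j‖ ^ 2 := by rw [hnorm, Finset.mul_sum]
    _ ≤ ∑ j, lam (g j) * ‖b j‖ ^ 2 := by gcongr with j; exact hlam j
    _ = ∑ j, d (f j) * ‖a j‖ ^ 2 := hquad.symm
    _ ≤ ∑ j, d (τ i) * ‖a j‖ ^ 2 := by gcongr with j; exact hd j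
    _ = d (τ i) * ∑ j, ‖a j‖ ^ 2 := (Finset.mul_sum ..).symm

end IsDiagCompression

end Matrix

section Compression

variable {𝕜 : Type*} [RCLike 𝕜] {n k : ℕ} {B Q : Matrix (Fin n) (Fin n) 𝕜} {lam : Fin n → ℝ}

lemma sum_arccot_le_Pfun_of_isDiagCompression {U : Matrix (Fin n) (Fin (k - 1)) 𝕜}
    {d : Fin (k - 1) → ℝ} (hQ : IsDiagCompression B Q lam) (hU : IsDiagCompression B U d)
    (hk : k - 1 ≤ n) :
    ∑ i, arccot (d i) ≤ Pfun n k lam := by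
  let e : Fin (k - 1) ↪ Fin n := (Fin.castLEEmb hk).trans (Tuple.sort lam).toEmbedding
  calc ∑ i, arccot (d i) = ∑ j, arccot (d (Tuple.sort d j)) :=
        (Equiv.sum_comp (Tuple.sort d) _).symm
    _ ≤ ∑ j, arccot (lam (e j)) :=
        Finset.sum_le_sum fun j _ => arccot_antitone (hQ.sort_le_sort hU hk j)
    _ = ∑ i ∈ Finset.univ.map e, arccot (lam i) := by rw [Finset.sum_map]
    _ ≤ Pfun n k lam := sum_arccot_le_Pfun lam (by simp)

lemma exists_isDiagCompression_sum_arccot_eq_Pfun (hQ : IsDiagCompression B Q lam)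
    (hk : k - 1 ≤ n) :
    ∃ (U : Matrix (Fin n) (Fin (k - 1)) 𝕜) (d : Fin (k - 1) → ℝ),
      IsDiagCompression B U d ∧ ∑ i, arccot (d i) = Pfun n k lam := by
  obtain ⟨s, hs, hsum⟩ := exists_sum_arccot_eq_Pfun lam hk
  let e := s.orderEmbOfFin hs
  refine ⟨_, _, hQ.submatrix e.injective, ?_⟩
  rw [← hsum, ← s.image_orderEmbOfFin_univ hs, Finset.sum_image fun _ _ _ _ h => e.injective h]
  rfl

end Compression

theorem Pfun_variational_general (n k : ℕ) (hkn : k ≤ n)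
    (B : Matrix (Fin n) (Fin n) ℂ) (hB : B.IsHermitian) :
    (∀ (U : Matrix (Fin n) (Fin (k - 1)) ℂ) (d : Fin (k - 1) → ℝ),
        Uᴴ * U = 1 → Uᴴ * B * U = Matrix.diagonal (fun i => (d i : ℂ)) →
        (∑ i, arccot (d i)) ≤ Pfun n k hB.eigenvalues) ∧
    (∃ (U : Matrix (Fin n) (Fin (k - 1)) ℂ) (d : Fin (k - 1) → ℝ),
        Uᴴ * U = 1 ∧ Uᴴ * B * U = Matrix.diagonal (fun i => (d i : ℂ)) ∧
        (∑ i, arccot (d i)) = Pfun n k hB.eigenvalues) := by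
  have hk : k - 1 ≤ n := by omega
  have hQ := hB.isDiagCompression_eigenvectorUnitary
  refine ⟨fun U d hU hD => sum_arccot_le_Pfun_of_isDiagCompression hQ ⟨hU, hD⟩ hk, ?_⟩
  obtain ⟨U, d, ⟨hU, hD⟩, hsum⟩ := exists_isDiagCompression_sum_arccot_eq_Pfun hQ hk
  exact ⟨U, d, hU, hD, hsum⟩

theorem Pfun_variational (n k : ℕ) (hk : 2 ≤ k) (hkn : k ≤ n)
    (B : Matrix (Fin n) (Fin n) ℂ) (hB : B.IsHermitian)
    (hΓ : (∑ i, arccot (hB.eigenvalues i)) < π) :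
    (∀ (U : Matrix (Fin n) (Fin (k - 1)) ℂ) (d : Fin (k - 1) → ℝ),
        Uᴴ * U = 1 → Uᴴ * B * U = Matrix.diagonal (fun i => (d i : ℂ)) →
        (∑ i, arccot (d i)) ≤ Pfun n k hB.eigenvalues) ∧
    (∃ (U : Matrix (Fin n) (Fin (k - 1)) ℂ) (d : Fin (k - 1) → ℝ),
        Uᴴ * U = 1 ∧ Uᴴ * B * U = Matrix.diagonal (fun i => (d i : ℂ)) ∧
        (∑ i, arccot (d i)) = Pfun n k hB.eigenvalues) :=
  Pfun_variational_general n k hkn B hB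
end

section
/- For every integer n ≥ 1 and every θ ∈ (0, π), there exists a constant c₀ = c₀(n, θ) > 0 such that for every λ ∈ ℝⁿ and every ε with 0 < ε < θ: if Σ_{i=1}^n arccot(λᵢ) < θ, then Σ_{i=1}^n arccot(λᵢ + ε) < θ − c₀ ε. (This is the pointwise/eigenvalue form of the uniform semi-continuity of Q under the shift ω ↦ ω + εχ.) -/
open Real

lemma arctan_sub_ge (K a b : ℝ) (hab : a ≤ b) (ha : |a| ≤ K) (hb : |b| ≤ K) :
    (b - a) / (1 + K ^ 2) ≤ Real.arctan b - Real.arctan a := by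
  rcases eq_or_lt_of_le hab with rfl | hlt
  · simp
  · obtain ⟨c, hc, hceq⟩ := exists_hasDerivAt_eq_slope Real.arctan (fun x => 1 / (1 + x ^ 2))
      hlt (Real.continuous_arctan.continuousOn) (fun x _ => Real.hasDerivAt_arctan x)
    have hcK : |c| ≤ K := by
      rw [abs_le] at ha hb ⊢
      exact ⟨by linarith [hc.1], by linarith [hc.2]⟩
    have h1 : (0:ℝ) < 1 + c ^ 2 := by positivity
    have h2 : (0:ℝ) < 1 + K ^ 2 := by positivity
    have hle : 1 + c ^ 2 ≤ 1 + K ^ 2 := by nlinarith [sq_abs c, abs_nonneg c]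
    have hval : Real.arctan b - Real.arctan a = (b - a) / (1 + c ^ 2) := by
      rw [div_eq_div_iff h1.ne' (by linarith : b - a ≠ 0)] at hceq
      rw [eq_div_iff (ne_of_gt h1)]
      linarith
    rw [hval]
    gcongr

theorem Q_semicontinuity (n : ℕ) (hn : 1 ≤ n) (θ : ℝ) (hθ0 : 0 < θ) (hθπ : θ < π) :
    ∃ c₀ : ℝ, 0 < c₀ ∧
      ∀ (lam : Fin n → ℝ) (ε : ℝ), 0 < ε → ε < θ →
        (∑ i, arccot (lam i)) < θ → (∑ i, arccot (lam i + ε)) < θ - c₀ * ε := by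
  set L : ℝ := Real.tan (π / 2 - θ) with hL
  set M : ℝ := Real.tan (π / 2 - θ / (2 * n)) with hM
  have hn0 : (0:ℝ) < n := by exact_mod_cast hn
  have hθ2n : 0 < θ / (2 * n) := by positivity
  have hθ2nπ : θ / (2 * n) < π := by
    have hn1 : (1:ℝ) ≤ n := by exact_mod_cast hn
    have : θ / (2 * n) ≤ θ / 2 := by
      apply div_le_div_of_nonneg_left hθ0.le (by norm_num) ?_
      · linarith
    linarith
  have hLarctan : Real.arctan L = π / 2 - θ := by
    apply Real.arctan_tan <;> linarith [Real.pi_pos]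
  have hMarctan : Real.arctan M = π / 2 - θ / (2 * n) := by
    apply Real.arctan_tan <;> linarith
  set K : ℝ := |L| + |M| + π with hK
  have hKpos : 0 < 1 + K ^ 2 := by positivity
  refine ⟨min (1/2) (1 / (1 + K ^ 2)), lt_min (by norm_num) (by positivity), ?_⟩
  intro lam ε hε0 hεθ hsum
  set c₀ : ℝ := min (1/2) (1 / (1 + K ^ 2)) with hc₀
  have harccot_pos : ∀ x : ℝ, 0 < arccot x := fun x => by
    have := Real.arctan_lt_pi_div_two x
    simp only [arccot]; linarith
  -- each term is < θ, so lam i > L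
  have hterm : ∀ i, arccot (lam i) < θ := by
    intro i
    have h1 : arccot (lam i) ≤ ∑ j, arccot (lam j) :=
      Finset.single_le_sum (fun j _ => (harccot_pos (lam j)).le) (Finset.mem_univ i)
    linarith
  have hlamL : ∀ i, L < lam i := by
    intro i
    have := hterm i
    simp only [arccot] at this
    have : π / 2 - θ < Real.arctan (lam i) := by linarith
    rw [← hLarctan] at this
    exact Real.arctan_strictMono.lt_iff_lt.mp this
  by_cases hcase : ∀ i, M < lam i
  · -- all large: new sum < n * θ/(2n) = θ/2
    have hbound : ∀ i, arccot (lam i + ε) < θ / (2 * n) := by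
      intro i
      have hMlt : M < lam i + ε := by linarith [hcase i]
      have : Real.arctan M < Real.arctan (lam i + ε) := Real.arctan_strictMono hMlt
      simp only [arccot]
      rw [hMarctan] at this
      linarith
    have hsum2 : (∑ i, arccot (lam i + ε)) < θ / 2 := by
      calc (∑ i, arccot (lam i + ε)) < ∑ _i : Fin n, θ / (2 * n) := by
            apply Finset.sum_lt_sum_of_nonempty
            · exact Finset.univ_nonempty_iff.mpr (Fin.pos_iff_nonempty.mp hn)
            · exact fun i _ => hbound i
        _ = n * (θ / (2 * n)) := by simp [Finset.sum_const, mul_comm]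
        _ = θ / 2 := by field_simp
    have : c₀ * ε ≤ (1/2) * ε := by
      apply mul_le_mul_of_nonneg_right (min_le_left _ _) hε0.le
    linarith
  · push_neg at hcase
    obtain ⟨j, hj⟩ := hcase
    -- lam j ∈ (L, M], lam j + ε ∈ (L, M + π)
    have hKj : |lam j| ≤ K := by
      rw [abs_le]
      constructor
      · have := hlamL j
        have := neg_abs_le L
        simp only [hK]
        linarith [abs_nonneg M, Real.pi_pos]
      · have := le_abs_self M
        simp only [hK]
        linarith [abs_nonneg L, Real.pi_pos]
    have hKjε : |lam j + ε| ≤ K := by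
      rw [abs_le]
      constructor
      · have := hlamL j
        have := neg_abs_le L
        simp only [hK]
        linarith [abs_nonneg M, Real.pi_pos]
      · have := le_abs_self M
        simp only [hK]
        linarith [abs_nonneg L]
    have hdj : ε / (1 + K ^ 2) ≤ arccot (lam j) - arccot (lam j + ε) := by
      have := arctan_sub_ge K (lam j) (lam j + ε) (by linarith) hKj hKjε
      simp only [arccot]
      have h : lam j + ε - lam j = ε := by ring
      rw [h] at this
      linarith
    have hmono : ∀ i, arccot (lam i + ε) ≤ arccot (lam i) := by
      intro i
      simp only [arccot]
      have := Real.arctan_strictMono (show lam i < lam i + ε by linarith)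
      linarith
    have hsumle : (∑ i, arccot (lam i + ε)) ≤ (∑ i, arccot (lam i)) - (arccot (lam j) - arccot (lam j + ε)) := by
      have h1 : (∑ i, arccot (lam i)) - (∑ i, arccot (lam i + ε))
          = ∑ i, (arccot (lam i) - arccot (lam i + ε)) := by
        rw [Finset.sum_sub_distrib]
      have h2 : arccot (lam j) - arccot (lam j + ε) ≤ ∑ i, (arccot (lam i) - arccot (lam i + ε)) :=
        Finset.single_le_sum (f := fun i => arccot (lam i) - arccot (lam i + ε))
          (fun i _ => sub_nonneg.mpr (hmono i)) (Finset.mem_univ j)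
      linarith
    have hc₀le : c₀ * ε ≤ ε / (1 + K ^ 2) := by
      have : c₀ ≤ 1 / (1 + K ^ 2) := min_le_right _ _
      calc c₀ * ε ≤ (1 / (1 + K ^ 2)) * ε := mul_le_mul_of_nonneg_right this hε0.le
        _ = ε / (1 + K ^ 2) := by ring
    linarith
end

section
/- Let n ≥ 2 be an integer, let θ ∈ (0, π), and let λ ∈ ℝⁿ satisfy Σ_{i∈I} arccot(λᵢ) < θ for every subset I ⊆ {1,…,n} with |I| = n−1. Fix an integer 1 ≤ p ≤ n−1 and nonnegative real numbers c_J, indexed by the subsets J ⊆ {1,…,n} with |J| = p, with at least one c_J strictly positive. Then Σ_{|J|=p} c_J · sin( Σ_{j∈J} arccot(λⱼ) − θ ) · Π_{j∈J} √(λⱼ² + 1) < 0. (This is the coefficientwise content of the statement that Im(e^{−iθ}(ω+iχ)^p) < 0 as a (p,p)-form whenever P_χ(ω) < θ and 1 ≤ p ≤ n−1.) -/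
open Real

theorem im_part_negative (n : ℕ) (hn : 2 ≤ n) (θ : ℝ) (hθ0 : 0 < θ) (hθπ : θ < π)
    (lam : Fin n → ℝ)
    (hP : ∀ I : Finset (Fin n), I.card = n - 1 → (∑ i ∈ I, arccot (lam i)) < θ)
    (p : ℕ) (hp1 : 1 ≤ p) (hpn : p ≤ n - 1)
    (c : Finset (Fin n) → ℝ)
    (hc : ∀ J ∈ Finset.univ.powersetCard p, 0 ≤ c J)
    (hpos : ∃ J ∈ Finset.univ.powersetCard p, 0 < c J) :
    ∑ J ∈ (Finset.univ : Finset (Fin n)).powersetCard p,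
      c J * Real.sin ((∑ j ∈ J, arccot (lam j)) - θ) *
        ∏ j ∈ J, Real.sqrt ((lam j) ^ 2 + 1) < 0 := by
  have harccot_pos : ∀ x : ℝ, 0 < arccot x := fun x => by
    have := Real.arctan_lt_pi_div_two x
    unfold arccot; linarith
  -- each term is nonpositive, and one is negative
  have key : ∀ J ∈ (Finset.univ : Finset (Fin n)).powersetCard p,
      Real.sin ((∑ j ∈ J, arccot (lam j)) - θ) < 0 := by
    intro J hJ
    rw [Finset.mem_powersetCard] at hJ
    obtain ⟨-, hcard⟩ := hJ
    have hsum_nonneg : 0 ≤ ∑ j ∈ J, arccot (lam j) :=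
      Finset.sum_nonneg fun j _ => (harccot_pos (lam j)).le
    have hsum_lt : (∑ j ∈ J, arccot (lam j)) < θ := by
      obtain ⟨I, hJI, hIcard⟩ := Finset.exists_superset_card_eq
        (by rw [hcard]; exact hpn : J.card ≤ n - 1)
        (by simp)
      have hle : (∑ j ∈ J, arccot (lam j)) ≤ ∑ i ∈ I, arccot (lam i) :=
        Finset.sum_le_sum_of_subset_of_nonneg hJI fun i _ _ => (harccot_pos (lam i)).le
      exact hle.trans_lt (hP I hIcard)
    exact Real.sin_neg_of_neg_of_neg_pi_lt (by linarith) (by linarith)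
  have hprod : ∀ J : Finset (Fin n), 0 < ∏ j ∈ J, Real.sqrt ((lam j) ^ 2 + 1) := by
    intro J
    exact Finset.prod_pos fun j _ => Real.sqrt_pos.mpr (by positivity)
  obtain ⟨J₀, hJ₀, hcJ₀⟩ := hpos
  calc ∑ J ∈ (Finset.univ : Finset (Fin n)).powersetCard p,
      c J * Real.sin ((∑ j ∈ J, arccot (lam j)) - θ) *
        ∏ j ∈ J, Real.sqrt ((lam j) ^ 2 + 1)
      < ∑ _J ∈ (Finset.univ : Finset (Fin n)).powersetCard p, (0 : ℝ) := by
        apply Finset.sum_lt_sum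
        · intro J hJ
          exact mul_nonpos_of_nonpos_of_nonneg
            (mul_nonpos_of_nonneg_of_nonpos (hc J hJ) (key J hJ).le) (hprod J).le
        · refine ⟨J₀, hJ₀, ?_⟩
          exact mul_neg_of_neg_of_pos (mul_neg_of_pos_of_neg hcJ₀ (key J₀ hJ₀)) (hprod J₀)
    _ = 0 := Finset.sum_const_zero
end

section
/- Let n ≥ 1 and 1 ≤ m ≤ n be integers, let θ₀ ∈ (0, π), and let ϱ ∈ (0, 1) satisfy ϱ^{n−1} < tan(θ₀/n). Then for all positive real numbers μ₁, …, μ_m, one has Σ_{i=1}^m arccot( (cot(θ₀/n)·μᵢ + ϱ) / (μᵢ + ϱⁿ) ) < θ₀. (This is the eigenvalue computation showing Q_{χ+ϱⁿξ}( cot(θ₀/n)χ + ϱξ ) < θ₀, used to prove that t = 1 belongs to the solvable set 𝒯_ϱ.) -/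
open Real

theorem eigenvalue_computation_t_eq_one (n m : ℕ) (hn : 1 ≤ n) (hm : 1 ≤ m) (hmn : m ≤ n)
    (θ₀ : ℝ) (hθ0 : 0 < θ₀) (hθπ : θ₀ < π)
    (ϱ : ℝ) (hϱ0 : 0 < ϱ) (hϱ1 : ϱ < 1)
    (hϱ : ϱ ^ (n - 1) < Real.tan (θ₀ / (n : ℝ))) :
    ∀ μ : Fin m → ℝ, (∀ i, 0 < μ i) →
      (∑ i, arccot ((Real.cot (θ₀ / (n : ℝ)) * μ i + ϱ) / (μ i + ϱ ^ n))) < θ₀ := by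
  intro μ hμ
  have hn0 : (0:ℝ) < n := by exact_mod_cast hn
  set t : ℝ := θ₀ / n with ht
  have ht0 : 0 < t := div_pos hθ0 hn0
  have htπ : t < π := lt_of_le_of_lt (div_le_self hθ0.le (by exact_mod_cast hn)) hθπ
  have htan : 0 < Real.tan t := lt_trans (pow_pos hϱ0 _) hϱ
  have ht2 : t < π / 2 := by
    by_contra h
    push_neg at h
    rcases eq_or_lt_of_le h with h | h
    · rw [← h, Real.tan_pi_div_two] at htan; exact lt_irrefl _ htan
    · have : Real.tan (t - π) < 0 :=
        Real.tan_neg_of_neg_of_pi_div_two_lt (by linarith) (by linarith)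
      rw [Real.tan_sub_pi] at this; linarith
  have hsin : 0 < Real.sin t := Real.sin_pos_of_pos_of_lt_pi ht0 htπ
  have hcos : 0 < Real.cos t := Real.cos_pos_of_mem_Ioo ⟨by linarith [Real.pi_pos], ht2⟩
  set c : ℝ := Real.cot t with hc
  have hcinv : c = (Real.tan t)⁻¹ := by
    rw [hc, Real.cot_eq_cos_div_sin, Real.tan_eq_sin_div_cos]
    field_simp
  have hc0 : 0 < c := by rw [hcinv]; exact inv_pos.mpr htan
  -- key per-term bound : arccot ((c * μ i + ϱ)/(μ i + ϱ^n)) < t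
  have key : ∀ i, arccot ((c * μ i + ϱ) / (μ i + ϱ ^ n)) < t := by
    intro i
    have hμi := hμ i
    have hden : 0 < μ i + ϱ ^ n := by positivity
    have hcr : c * ϱ ^ n < ϱ := by
      have hpow : ϱ ^ n = ϱ ^ (n - 1) * ϱ := by
        rw [← pow_succ]
        congr 1
        omega
      have h1 : c * ϱ ^ (n - 1) < c * Real.tan t := by
        exact (mul_lt_mul_iff_right₀ hc0).mpr hϱ
      have h2 : c * Real.tan t = 1 := by
        rw [hcinv]; field_simp
      calc c * ϱ ^ n = (c * ϱ ^ (n - 1)) * ϱ := by rw [hpow]; ring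
        _ < 1 * ϱ := by
            apply mul_lt_mul_of_pos_right _ hϱ0
            rw [← h2]; exact h1
        _ = ϱ := one_mul ϱ
    have hx : c < (c * μ i + ϱ) / (μ i + ϱ ^ n) := by
      rw [lt_div_iff₀ hden]
      nlinarith
    have harctan : π / 2 - t < Real.arctan ((c * μ i + ϱ) / (μ i + ϱ ^ n)) := by
      have h1 : Real.arctan c = π / 2 - t := by
        have : c = Real.tan (π / 2 - t) := by rw [Real.tan_pi_div_two_sub, hcinv]
        rw [this, Real.arctan_tan (by linarith [Real.pi_pos]) (by linarith)]
      calc π / 2 - t = Real.arctan c := h1.symm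
        _ < _ := Real.arctan_strictMono hx
    unfold arccot
    linarith
  have hsum : (∑ i, arccot ((c * μ i + ϱ) / (μ i + ϱ ^ n))) < ∑ _i : Fin m, t := by
    apply Finset.sum_lt_sum_of_nonempty
    · exact Finset.univ_nonempty_iff.mpr ⟨⟨0, hm⟩⟩
    · intro i _; exact key i
  have : (∑ _i : Fin m, t) = m * t := by
    rw [Finset.sum_const, Finset.card_univ, Fintype.card_fin, nsmul_eq_mul]
  rw [this] at hsum
  have hmt : (m : ℝ) * t ≤ θ₀ := by
    rw [ht]
    calc (m:ℝ) * (θ₀ / n) ≤ n * (θ₀ / n) := by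
          apply mul_le_mul_of_nonneg_right (by exact_mod_cast hmn) (by positivity)
      _ = θ₀ := by field_simp
  exact lt_of_lt_of_le hsum hmt
end
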